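/- arXiv:0901.4349 — 2 statements merged into one kernel-verified Lean document; each statement's English description precedes it below -/
import Mathlib

section
/- The quotient H n j / (r n − r (n−1)) depends only on j: for all natural numbers n, m ≥ 2 and every j with 1 ≤ j ≤ n and 1 ≤ j ≤ m, one has H n j · (r m − r (m−1)) = H m j · (r n − r (n−1)) in ℤ[X]. -/
/-!
For fixed `j`, both `n ↦ H n j` and `n ↦ r n - r (n - 1)` satisfy the recurrence defining `r`
for `n ≥ j`, so `H n j = (-1) ^ j (r j + 2X r (j - 1)) (r n - r (n - 1))` as soon as this holds
at `n = j` and `n = j + 1`. The first case is immediate, the second is the Cassini-type identity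
`r i r (i + 2) - r (i + 1) ^ 2 = (-1) ^ (i + 1) X ^ i`.
-/

open Polynomial

noncomputable def r : ℕ → Polynomial ℤ
  | 0 => 0
  | 1 => 1
  | (k + 2) => (1 - 2 * X) * r (k + 1) + X * r k

noncomputable def H (n j : ℕ) : Polynomial ℤ :=
  X ^ (j - 1) * (1 + 2 * X) * r (n - j) +
    (-1) ^ j * (r j - r (j - 1)) * (r n + 2 * X * r (n - 1))

theorem LinearRecurrence.comp_add_left_mem_solSpace {R : Type*} [CommSemiring R]
    {E : LinearRecurrence R} {u : ℕ → R} (hu : u ∈ E.solSpace) (a : ℕ) :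
    (fun k ↦ u (a + k)) ∈ E.solSpace := by
  intro k
  simpa only [add_assoc] using hu (a + k)

/-- `u (k + 2) = X u k + (1 - 2X) u (k + 1)`. -/
noncomputable def rRecurrence : LinearRecurrence ℤ[X] := ⟨2, ![X, 1 - 2 * X]⟩

theorem r_add_two (k : ℕ) : r (k + 2) = (1 - 2 * X) * r (k + 1) + X * r k := rfl

theorem r_mem_solSpace : r ∈ rRecurrence.solSpace := by
  intro k
  change r (k + 2) = ∑ i : Fin 2, ![X, 1 - 2 * X] i * r (k + i)
  simp [Fin.sum_univ_two, r_add_two, add_comm]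

theorem rRecurrence.eq_of_eq_zero_of_eq_one {u v : ℕ → ℤ[X]} (hu : u ∈ rRecurrence.solSpace)
    (hv : v ∈ rRecurrence.solSpace) (h0 : u 0 = v 0) (h1 : u 1 = v 1) : u = v := by
  refine (rRecurrence.eq_iff_eqOn_range_order u v hu hv).2 fun k hk ↦ ?_
  obtain rfl | rfl : k = 0 ∨ k = 1 := by simp [rRecurrence] at hk; omega
  exacts [h0, h1]

theorem r_mul_r_add_two_sub_sq (i : ℕ) :
    r i * r (i + 2) - r (i + 1) ^ 2 = (-1) ^ (i + 1) * X ^ i := by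
  induction i with
  | zero => simp [r]
  | succ i ih =>
    rw [r_add_two (i + 1), r_add_two i] at *
    linear_combination (-X) * ih

theorem H_add_one_add (i k : ℕ) : H (i + 1 + k) (i + 1) = X ^ i * (1 + 2 * X) * r k +
    (-1) ^ (i + 1) * (r (i + 1) - r i) * (r (i + 1 + k) + 2 * X * r (i + k)) := by
  rw [H, show i + 1 + k - (i + 1) = k by omega, show i + 1 + k - 1 = i + k by omega]
  rfl

theorem H_eq_mul_sub {n j : ℕ} (hj : 1 ≤ j) (hjn : j ≤ n) :
    H n j = (-1) ^ j * (r j + 2 * X * r (j - 1)) * (r n - r (n - 1)) := by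
  obtain ⟨i, rfl⟩ : ∃ i, j = i + 1 := ⟨j - 1, by omega⟩
  obtain ⟨k, rfl⟩ : ∃ k, n = i + 1 + k := ⟨n - (i + 1), by omega⟩
  rw [H_add_one_add, Nat.add_sub_cancel, show i + 1 + k - 1 = i + k by omega]
  set c : ℤ[X] := (-1) ^ (i + 1)
  have hr := rRecurrence.comp_add_left_mem_solSpace r_mem_solSpace
  have hL : (fun l ↦ X ^ i * (1 + 2 * X) * r l +
      c * (r (i + 1) - r i) * (r (i + 1 + l) + 2 * X * r (i + l))) ∈ rRecurrence.solSpace :=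
    add_mem (Submodule.smul_mem _ _ r_mem_solSpace)
      (Submodule.smul_mem _ _ (add_mem (hr _) (Submodule.smul_mem _ _ (hr _))))
  have hR : (fun l ↦ c * (r (i + 1) + 2 * X * r i) * (r (i + 1 + l) - r (i + l))) ∈
      rRecurrence.solSpace :=
    Submodule.smul_mem _ _ (sub_mem (hr _) (hr _))
  refine congrFun (rRecurrence.eq_of_eq_zero_of_eq_one hL hR ?_ ?_) k
  · simp only [r, add_zero]
    ring
  · have hc2 : c * c = 1 := by rw [← pow_add, ← two_mul, pow_mul]; simp
    have hc := r_mul_r_add_two_sub_sq i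
    rw [r_add_two] at hc
    simp only [r]
    linear_combination (-c * (1 + 2 * X)) * hc - X ^ i * (1 + 2 * X) * hc2

theorem H_quotient_depends_only_on_j_general (n m j : ℕ)
    (hj : 1 ≤ j) (hjn : j ≤ n) (hjm : j ≤ m) :
    H n j * (r m - r (m - 1)) = H m j * (r n - r (n - 1)) := by
  rw [H_eq_mul_sub hj hjn, H_eq_mul_sub hj hjm]
  ring

/-- The quotient `H n j / (r n - r (n-1))` depends only on `j`. -/
theorem H_quotient_depends_only_on_j (n m j : ℕ) (hn : 2 ≤ n) (hm : 2 ≤ m)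
    (hj : 1 ≤ j) (hjn : j ≤ n) (hjm : j ≤ m) :
    H n j * (r m - r (m - 1)) = H m j * (r n - r (n - 1)) :=
  H_quotient_depends_only_on_j_general n m j hj hjn hjm
end

section
/- For every natural number k, the evaluation of r k at −1/2 equals (A^k − B^k) / (√2 · 2^k), where A = 2 + √2 and B = 2 − √2. -/
open Polynomial

noncomputable def A : ℝ := 2 + Real.sqrt 2
noncomputable def B : ℝ := 2 - Real.sqrt 2

/-! At `x = -1/2` the recurrence becomes `u (k+2) = 2 u (k+1) - u k / 2`, whose characteristic
roots are `A / 2` and `B / 2`, with difference `√2`; Binet's formula gives the claim. -/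

/-- Binet's formula, multiplied out so that it needs neither a field nor distinct roots. -/
theorem mul_sub_eq_pow_sub_pow_of_recurrence {R : Type*} [CommRing R] {u : ℕ → R} {p q α β : R}
    (hα : α ^ 2 = p * α + q) (hβ : β ^ 2 = p * β + q) (h0 : u 0 = 0) (h1 : u 1 = 1)
    (hrec : ∀ n, u (n + 2) = p * u (n + 1) + q * u n) (n : ℕ) :
    u n * (α - β) = α ^ n - β ^ n := by
  induction n using Nat.twoStepInduction with
  | zero => simp [h0]
  | one => simp [h1]
  | more n ih ih' =>
    calc u (n + 2) * (α - β) = p * (u (n + 1) * (α - β)) + q * (u n * (α - β)) := by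
          rw [hrec]; ring
      _ = α ^ n * α ^ 2 - β ^ n * β ^ 2 := by rw [ih, ih', hα, hβ]; ring
      _ = α ^ (n + 2) - β ^ (n + 2) := by ring

theorem aeval_r_add_two {S : Type*} [CommRing S] (x : S) (k : ℕ) :
    aeval x (r (k + 2)) = (1 - 2 * x) * aeval x (r (k + 1)) + x * aeval x (r k) := by
  simp [r, map_ofNat]

theorem half_A_sq : (A / 2) ^ 2 = 2 * (A / 2) + -1 / 2 := by
  have hs : Real.sqrt 2 ^ 2 = 2 := Real.sq_sqrt (by norm_num)
  rw [A]; linear_combination hs / 4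

theorem half_B_sq : (B / 2) ^ 2 = 2 * (B / 2) + -1 / 2 := by
  have hs : Real.sqrt 2 ^ 2 = 2 := Real.sq_sqrt (by norm_num)
  rw [B]; linear_combination hs / 4

theorem half_A_sub_half_B : A / 2 - B / 2 = Real.sqrt 2 := by
  rw [A, B]; ring

/-- The evaluation of `r k` at `-1/2` equals `(A^k - B^k)/(√2 · 2^k)`. -/
theorem r_eval_neg_half (k : ℕ) :
    (Polynomial.aeval (-1 / 2 : ℝ) (r k)) = (A ^ k - B ^ k) / (Real.sqrt 2 * 2 ^ k) := by
  have binet := mul_sub_eq_pow_sub_pow_of_recurrence half_A_sq half_B_sq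
    (u := fun k ↦ aeval (-1 / 2 : ℝ) (r k)) (by simp [r]) (by simp [r])
    (fun n ↦ by rw [aeval_r_add_two]; norm_num) k
  rw [half_A_sub_half_B, div_pow, div_pow, div_sub_div_same] at binet
  rw [eq_div_iff (by positivity), ← mul_assoc, binet, div_mul_cancel₀ _ (by positivity)]
end
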